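/- arXiv:2306.09780 — 2 statements merged into one kernel-verified Lean document; each statement's English description precedes it below -/
import Mathlib

section
/- Let m_1, …, m_n ∈ ℝ^d and let λ ∈ ℝ^d satisfy 1 + ⟨λ, m_i⟩ > 0 for all i = 1, …, n. Then for every π ∈ ℝ^n with π_i > 0 for all i, Σ_{i=1}^n π_i = 1, and Σ_{i=1}^n π_i m_i = 0, the weak duality inequality Σ_{i=1}^n log(n π_i) ≤ − Σ_{i=1}^n log(1 + ⟨λ, m_i⟩) holds. -/
open Matrix

/-- Weak duality for the empirical likelihood problem: if
`1 + ⟨λ, mᵢ⟩ > 0` for all `i`, then for every strictly positive probability weight vector `π`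
satisfying the moment constraint `Σ πᵢ mᵢ = 0`, we have
`Σ log (n πᵢ) ≤ − Σ log (1 + ⟨λ, mᵢ⟩)`. -/
theorem el_weak_duality
    {n d : ℕ} (mv : Fin n → (Fin d → ℝ)) (lam : Fin d → ℝ)
    (hlam : ∀ i, 0 < 1 + lam ⬝ᵥ mv i)
    (π : Fin n → ℝ) (hpos : ∀ i, 0 < π i) (hsum : (∑ i, π i) = 1)
    (hmom : (∑ i, π i • mv i) = 0) :
    (∑ i, Real.log (n * π i)) ≤ -∑ i, Real.log (1 + lam ⬝ᵥ mv i) := by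
  rcases Nat.eq_zero_or_pos n with hn | hn
  · subst hn; simp
  have hn0 : (0:ℝ) < n := by exact_mod_cast hn
  -- key: Σ πᵢ (1 + ⟨λ,mᵢ⟩) = 1
  have hkey : (∑ i, π i * (1 + lam ⬝ᵥ mv i)) = 1 := by
    have hdot : (∑ i, π i * (lam ⬝ᵥ mv i)) = lam ⬝ᵥ (∑ i, π i • mv i) := by
      simp only [dotProduct, Finset.sum_apply, Pi.smul_apply, smul_eq_mul,
        Finset.mul_sum, Finset.sum_mul]
      rw [Finset.sum_comm]
      congr 1; ext i; congr 1; ext j; ring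
    have : (∑ i, π i * (1 + lam ⬝ᵥ mv i)) = (∑ i, π i) + ∑ i, π i * (lam ⬝ᵥ mv i) := by
      rw [← Finset.sum_add_distrib]; congr 1; ext i; ring
    rw [this, hdot, hmom, hsum]; simp
  rw [← sub_nonpos, sub_neg_eq_add, ← Finset.sum_add_distrib]
  have hle : ∀ i ∈ Finset.univ, Real.log (n * π i) + Real.log (1 + lam ⬝ᵥ mv i)
      ≤ n * (π i * (1 + lam ⬝ᵥ mv i)) - 1 := by
    intro i _
    have hp := hpos i
    have hl := hlam i
    have hx : (0:ℝ) < n * π i * (1 + lam ⬝ᵥ mv i) := by positivity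
    calc Real.log (n * π i) + Real.log (1 + lam ⬝ᵥ mv i)
        = Real.log (n * π i * (1 + lam ⬝ᵥ mv i)) := by
          rw [Real.log_mul (by positivity) (ne_of_gt hl)]
      _ ≤ n * π i * (1 + lam ⬝ᵥ mv i) - 1 := Real.log_le_sub_one_of_pos hx
      _ = n * (π i * (1 + lam ⬝ᵥ mv i)) - 1 := by ring
  calc (∑ i, (Real.log (n * π i) + Real.log (1 + lam ⬝ᵥ mv i)))
      ≤ ∑ i, (n * (π i * (1 + lam ⬝ᵥ mv i)) - 1) := Finset.sum_le_sum hle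
    _ = n * (∑ i, π i * (1 + lam ⬝ᵥ mv i)) - n := by
        rw [Finset.sum_sub_distrib, ← Finset.mul_sum]; simp
    _ = 0 := by rw [hkey]; ring
end

section
/- Let m_1, …, m_n ∈ ℝ^d and let λ ∈ ℝ^d satisfy 1 + ⟨λ, m_i⟩ > 0 for all i. Define π_i = 1/(n(1 + ⟨λ, m_i⟩)) for i = 1, …, n, and assume Σ_{i=1}^n π_i = 1 and Σ_{i=1}^n π_i m_i = 0. Then π maximizes the empirical log-likelihood over the feasible set: for every π' ∈ ℝ^n with π'_i > 0 for all i, Σ_{i=1}^n π'_i = 1, and Σ_{i=1}^n π'_i m_i = 0, we have Σ_{i=1}^n log π'_i ≤ Σ_{i=1}^n log π_i. -/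
open Matrix

/-- If `πᵢ = 1/(n(1 + ⟨λ, mᵢ⟩))` defines a probability weight vector satisfying
the moment constraint `Σ πᵢ mᵢ = 0`, then `π` maximizes the empirical log-likelihood
`Σ log πᵢ` over all strictly positive probability weight vectors satisfying the constraint. -/
theorem el_dual_solution_maximizes
    {n d : ℕ} (mv : Fin n → (Fin d → ℝ)) (lam : Fin d → ℝ)
    (hlam : ∀ i, 0 < 1 + lam ⬝ᵥ mv i)
    (π : Fin n → ℝ) (hdef : ∀ i, π i = 1 / (n * (1 + lam ⬝ᵥ mv i)))
    (hsum : (∑ i, π i) = 1) (hmom : (∑ i, π i • mv i) = 0) :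
    ∀ π' : Fin n → ℝ, (∀ i, 0 < π' i) → (∑ i, π' i) = 1 → (∑ i, π' i • mv i) = 0 →
      (∑ i, Real.log (π' i)) ≤ ∑ i, Real.log (π i) := by
  intro π' hpos hsum' hmom'
  have hn : (0 : ℝ) < n := by
    rcases Nat.eq_zero_or_pos n with h | h
    · subst h; simp at hsum
    · exact_mod_cast h
  have hπpos : ∀ i, 0 < π i := by
    intro i
    rw [hdef i]
    exact div_pos one_pos (mul_pos hn (hlam i))
  have hdot : ∑ i, π' i * (lam ⬝ᵥ mv i) = 0 := by
    have h := congrArg (fun v => lam ⬝ᵥ v) hmom'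
    simpa [dotProduct, Finset.mul_sum, Finset.sum_comm (γ := Fin n), mul_comm,
      mul_left_comm] using h
  have key : ∑ i, π' i / π i = n := by
    have h1 : ∀ i, π' i / π i = n * π' i + n * (π' i * (lam ⬝ᵥ mv i)) := by
      intro i
      rw [hdef i]
      field_simp
    calc ∑ i, π' i / π i = ∑ i, (n * π' i + n * (π' i * (lam ⬝ᵥ mv i))) :=
          Finset.sum_congr rfl (fun i _ => h1 i)
      _ = n * (∑ i, π' i) + n * (∑ i, π' i * (lam ⬝ᵥ mv i)) := by
          rw [Finset.sum_add_distrib, ← Finset.mul_sum, ← Finset.mul_sum]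
      _ = n := by rw [hsum', hdot]; ring
  have hlog : ∀ i, Real.log (π' i) - Real.log (π i) ≤ π' i / π i - 1 := by
    intro i
    have := Real.log_le_sub_one_of_pos (div_pos (hpos i) (hπpos i))
    rwa [Real.log_div (hpos i).ne' (hπpos i).ne'] at this
  have := Finset.sum_le_sum (fun i (_ : i ∈ Finset.univ) => hlog i)
  rw [Finset.sum_sub_distrib, Finset.sum_sub_distrib, key, Finset.sum_const,
    Finset.card_univ, Fintype.card_fin, nsmul_eq_mul, mul_one, sub_self] at this
  linarith
end
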